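/- arXiv:2408.13424 — 3 statements merged into one kernel-verified Lean document; each statement's English description precedes it below -/
import Mathlib

section
/- (Switch Lemma) Suppose a randomized algorithm A from L2^{n×d} to an output space satisfies (B, ε, δ)-targeted differential privacy with B, ε > 0. Then for all classic neighboring datasets X, X̂ ∈ L2^{n×d} and all measurable events E, P(A(X) ∈ E) ≤ e^{sε} P(A(X̂) ∈ E) + ((e^{sε} − 1)/(e^ε − 1)) δ, where s = ⌈d(X, X̂)/B⌉ and d(X, X̂) = Σ_i ||X_i − X̂_i||_2 is the cumulative row-wise L2 distance. -/
open MeasureTheory Real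

noncomputable section

/-- Datasets: real n×d matrices as functions. -/
abbrev Mat (n d : ℕ) := Fin n → Fin d → ℝ

/-- Euclidean (L2) distance between two rows. -/
def rowDist {d : ℕ} (u v : Fin d → ℝ) : ℝ := Real.sqrt (∑ j, (u j - v j) ^ 2)

/-- The set of n×d matrices each of whose rows has L2 norm at most 1. -/
def L2Ball (n d : ℕ) : Set (Mat n d) :=
  {X | ∀ i, Real.sqrt (∑ j, (X i j) ^ 2) ≤ 1}

/-- Classic neighbors: agree on exactly n−1 rows. -/
def ClassicNeighbors {n d : ℕ} (X X' : Mat n d) : Prop :=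
  ∃ i, X i ≠ X' i ∧ ∀ j, j ≠ i → X j = X' j

/-- B-neighbors: classic neighbors whose differing rows are within L2 distance B. -/
def BNeighbors {n d : ℕ} (B : ℝ) (X X' : Mat n d) : Prop :=
  ∃ i, X i ≠ X' i ∧ (∀ j, j ≠ i → X j = X' j) ∧ rowDist (X i) (X' i) ≤ B

/-- (B, ε, δ)-targeted differential privacy. -/
def TDP {n d : ℕ} {Ω : Type*} [MeasurableSpace Ω]
    (A : Mat n d → Measure Ω) (B ε δ : ℝ) : Prop :=
  ∀ X ∈ L2Ball n d, ∀ X' ∈ L2Ball n d, BNeighbors B X X' →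
    ∀ E : Set Ω, MeasurableSet E →
      A X E ≤ ENNReal.ofReal (Real.exp ε) * A X' E + ENNReal.ofReal δ

/-- (ε, δ)-classic differential privacy. -/
def ClassicDP {n d : ℕ} {Ω : Type*} [MeasurableSpace Ω]
    (A : Mat n d → Measure Ω) (ε δ : ℝ) : Prop :=
  ∀ X ∈ L2Ball n d, ∀ X' ∈ L2Ball n d, ClassicNeighbors X X' →
    ∀ E : Set Ω, MeasurableSet E →
      A X E ≤ ENNReal.ofReal (Real.exp ε) * A X' E + ENNReal.ofReal δ

/-- Cumulative row-wise L2 distance between two datasets. -/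
def cumDist {n d : ℕ} (X X' : Mat n d) : ℝ := ∑ i, rowDist (X i) (X' i)

/-- Squared Frobenius norm. -/
def frobSq {a b : ℕ} (M : Fin a → Fin b → ℝ) : ℝ := ∑ i, ∑ j, (M i j) ^ 2

/-
Move from `X` to `Y` in `s = ⌈d(X, Y)/B⌉` equal steps along the segment between them. Only the one
row in which `X` and `Y` differ changes, each step changes it by `d(X, Y)/s ≤ B`, and every
intermediate dataset stays in `L2^{n×d}` by convexity, so consecutive datasets are `B`-neighbours.
Chaining the `s` targeted-privacy inequalities gives the factor `e^{sε}` and the additive term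
`(1 + e^ε + ⋯ + e^{(s-1)ε}) δ`, a geometric sum.
-/

open Finset
open scoped ENNReal

theorem sqrt_sum_sq_eq_norm_toLp {d : ℕ} (u : Fin d → ℝ) :
    √(∑ j, u j ^ 2) = ‖WithLp.toLp 2 u‖ := by
  simp [EuclideanSpace.norm_eq]

theorem rowDist_eq_norm_toLp_sub {d : ℕ} (u v : Fin d → ℝ) :
    rowDist u v = ‖WithLp.toLp 2 (u - v)‖ := by
  rw [← sqrt_sum_sq_eq_norm_toLp]
  rfl

theorem rowDist_pos {d : ℕ} {u v : Fin d → ℝ} (h : u ≠ v) : 0 < rowDist u v := by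
  rw [rowDist_eq_norm_toLp_sub, norm_pos_iff]
  simpa [sub_eq_zero] using h

theorem rowDist_add_smul_sub {d : ℕ} (u v : Fin d → ℝ) (a b : ℝ) :
    rowDist (u + a • (v - u)) (u + b • (v - u)) = |a - b| * rowDist u v := by
  rw [rowDist_eq_norm_toLp_sub, rowDist_eq_norm_toLp_sub,
    show u + a • (v - u) - (u + b • (v - u)) = (b - a) • (u - v) by module,
    WithLp.toLp_smul, norm_smul, Real.norm_eq_abs, abs_sub_comm]

theorem convex_L2Ball (n d : ℕ) : Convex ℝ (L2Ball n d) := by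
  let row (i : Fin n) : Mat n d →ₗ[ℝ] EuclideanSpace ℝ (Fin d) :=
    (WithLp.linearEquiv 2 ℝ (Fin d → ℝ)).symm.toLinearMap ∘ₗ LinearMap.proj i
  have : L2Ball n d = ⋂ i, row i ⁻¹' Metric.closedBall 0 1 := by
    ext X
    simp [L2Ball, row, sqrt_sum_sq_eq_norm_toLp]
  rw [this]
  exact convex_iInter fun i => (convex_closedBall 0 1).linear_preimage (row i)

theorem cumDist_eq_rowDist {n d : ℕ} {X Y : Mat n d} {i : Fin n}
    (hrow : ∀ j, j ≠ i → X j = Y j) : cumDist X Y = rowDist (X i) (Y i) := by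
  refine sum_eq_single_of_mem i (mem_univ i) fun j _ hj => ?_
  simp [rowDist, hrow j hj]

theorem BNeighbors.mono {n d : ℕ} {B B' : ℝ} {X Y : Mat n d} (h : BNeighbors B X Y)
    (hB : B ≤ B') : BNeighbors B' X Y :=
  let ⟨i, hne, hrow, hdist⟩ := h
  ⟨i, hne, hrow, hdist.trans hB⟩

theorem bNeighbors_add_smul_sub {n d : ℕ} {X Y : Mat n d} {i : Fin n}
    (hne : X i ≠ Y i) (hrow : ∀ j, j ≠ i → X j = Y j) {a b : ℝ} (hab : a ≠ b) :
    BNeighbors (|a - b| * rowDist (X i) (Y i)) (X + a • (Y - X)) (X + b • (Y - X)) := by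
  refine ⟨i, ?_, fun j hj => by simp [hrow j hj], ?_⟩
  · intro h
    have h' : a • (Y i - X i) = b • (Y i - X i) := by simpa using h
    exact hab (smul_left_injective ℝ (sub_ne_zero.2 hne.symm) h')
  · simp only [Pi.add_apply, Pi.smul_apply, Pi.sub_apply]
    rw [rowDist_add_smul_sub]

theorem ENNReal.le_pow_mul_add_geom_sum_mul {a : ℕ → ℝ≥0∞} {r c : ℝ≥0∞} {s : ℕ}
    (h : ∀ k < s, a k ≤ r * a (k + 1) + c) :
    a 0 ≤ r ^ s * a s + (∑ j ∈ range s, r ^ j) * c := by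
  induction s with
  | zero => simp
  | succ s ih =>
    calc a 0 ≤ r ^ s * a s + (∑ j ∈ range s, r ^ j) * c := ih fun k hk => h k (by omega)
      _ ≤ r ^ s * (r * a (s + 1) + c) + (∑ j ∈ range s, r ^ j) * c := by
        gcongr
        exact h s (by omega)
      _ = r ^ (s + 1) * a (s + 1) + (∑ j ∈ range (s + 1), r ^ j) * c := by
        rw [sum_range_succ]
        ring

theorem le_ofReal_exp_nat_mul_mul_add {a : ℕ → ℝ≥0∞} {ε δ : ℝ} (hε : ε ≠ 0) {s : ℕ}
    (h : ∀ k < s, a k ≤ ENNReal.ofReal (exp ε) * a (k + 1) + ENNReal.ofReal δ) :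
    a 0 ≤ ENNReal.ofReal (exp (s * ε)) * a s +
      ENNReal.ofReal ((exp (s * ε) - 1) / (exp ε - 1) * δ) := by
  have hgeom : ∑ j ∈ range s, exp ε ^ j = (exp (s * ε) - 1) / (exp ε - 1) := by
    rw [geom_sum_eq (by simpa using hε), exp_nat_mul]
  convert ENNReal.le_pow_mul_add_geom_sum_mul h using 3
  · rw [← ENNReal.ofReal_pow (exp_pos ε).le, exp_nat_mul]
  · rw [← hgeom, ENNReal.ofReal_mul (by positivity),
      ENNReal.ofReal_sum_of_nonneg fun j _ => by positivity]
    simp_rw [ENNReal.ofReal_pow (exp_pos ε).le]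

theorem switch_lemma_general {n d : ℕ} {Ω : Type*} [MeasurableSpace Ω]
    (A : Mat n d → Measure Ω) (B ε δ : ℝ)
    (hB : 0 < B) (hε : 0 < ε)
    (hA : TDP A B ε δ)
    (X : Mat n d) (hX : X ∈ L2Ball n d)
    (Y : Mat n d) (hY : Y ∈ L2Ball n d)
    (hcn : ClassicNeighbors X Y)
    (E : Set Ω) (hE : MeasurableSet E) :
    A X E ≤ ENNReal.ofReal (Real.exp ((⌈cumDist X Y / B⌉₊ : ℝ) * ε)) * A Y E +
      ENNReal.ofReal ((Real.exp ((⌈cumDist X Y / B⌉₊ : ℝ) * ε) - 1) /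
        (Real.exp ε - 1) * δ) := by
  obtain ⟨i, hne, hrow⟩ := hcn
  set s := ⌈cumDist X Y / B⌉₊
  have hD : cumDist X Y = rowDist (X i) (Y i) := cumDist_eq_rowDist hrow
  have hs : (0 : ℝ) < s := Nat.cast_pos.2 (Nat.ceil_pos.2 (div_pos (hD ▸ rowDist_pos hne) hB))
  have hstep_le : rowDist (X i) (Y i) / s ≤ B :=
    div_le_of_le_mul₀ hs.le hB.le (by rw [mul_comm, ← hD, ← div_le_iff₀ hB]; exact Nat.le_ceil _)
  let Z (k : ℕ) : Mat n d := X + ((k : ℝ) / s) • (Y - X)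
  have hZ (k : ℕ) (hk : k ≤ s) : Z k ∈ L2Ball n d :=
    (convex_L2Ball n d).add_smul_sub_mem hX hY
      ⟨by positivity, div_le_one_of_le₀ (by exact_mod_cast hk) hs.le⟩
  have hneighbors (k : ℕ) : BNeighbors B (Z k) (Z (k + 1)) := by
    refine (bNeighbors_add_smul_sub hne hrow ?_).mono ?_
    · push_cast
      exact (div_lt_div_of_pos_right (lt_add_one _) hs).ne
    · rw [abs_sub_comm, show ((k + 1 : ℕ) : ℝ) / s - k / s = 1 / s by push_cast; ring,
        abs_of_pos (by positivity), one_div_mul_eq_div]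
      exact hstep_le
  have := le_ofReal_exp_nat_mul_mul_add hε.ne' (a := fun k => A (Z k) E) (s := s)
    fun k hk => hA _ (hZ k hk.le) _ (hZ (k + 1) hk) (hneighbors k) E hE
  simpa [Z, hs.ne'] using this

/-- Switch Lemma: a (B, ε, δ)-TDP algorithm satisfies a degraded
guarantee between any two classic neighbors, with s = ⌈d(X, Y)/B⌉. -/
theorem switch_lemma {n d : ℕ} {Ω : Type*} [MeasurableSpace Ω]
    (A : Mat n d → Measure Ω) (B ε δ : ℝ)
    (hB : 0 < B) (hε : 0 < ε) (hδ : 0 ≤ δ)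
    (hA : TDP A B ε δ)
    (X : Mat n d) (hX : X ∈ L2Ball n d)
    (Y : Mat n d) (hY : Y ∈ L2Ball n d)
    (hcn : ClassicNeighbors X Y)
    (E : Set Ω) (hE : MeasurableSet E) :
    A X E ≤ ENNReal.ofReal (Real.exp ((⌈cumDist X Y / B⌉₊ : ℝ) * ε)) * A Y E +
      ENNReal.ofReal ((Real.exp ((⌈cumDist X Y / B⌉₊ : ℝ) * ε) - 1) /
        (Real.exp ε - 1) * δ) :=
  switch_lemma_general A B ε δ hB hε hA X hX Y hY hcn E hE
end
end

section
/- Let each entry of R ∈ R^{d×k} be sampled i.i.d. from the distribution on {−1, 0, 1} with P(0) = p_0 and P(−1) = P(1) = (1 − p_0)/2 for p_0 ∈ (0,1). Then for B-neighbors X, X' ∈ L2^{n×d}, P(||k^{-1}XR − k^{-1}X'R||_F ≥ α) ≤ β whenever α ≥ (B/√k) √(d ln((1−p_0)(e−1) + 1) − k^{-1} ln β). -/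
/-!
Only row `i` of `XR - X'R` is nonzero, where `X` and `X'` differ, and by Cauchy–Schwarz its
squared norm is at most `B² Y` with `Y = ∑ R_{pj}²`; so the event forces `Y ≥ k²α²/B²`. Each
`R_{pj}²` is a Bernoulli variable, so `E[exp R_{pj}²] = (1 - p₀)(e - 1) + 1`, and by independence
`E[exp Y]` is its `dk`-th power. Markov's inequality for `exp Y` then gives the bound, and the
threshold on `α` is exactly what makes it at most `β` (for `β ≥ 1` there is nothing to prove).
-/

open MeasureTheory Real

noncomputable section

open ProbabilityTheory Finset
open scoped ENNReal

theorem lintegral_pi_prod_eq_prod {ι : Type*} [Fintype ι] {E : ι → Type*}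
    [∀ i, MeasurableSpace (E i)] (μ : ∀ i, Measure (E i)) [∀ i, IsProbabilityMeasure (μ i)]
    {f : ∀ i, E i → ℝ≥0∞} (hf : ∀ i, Measurable (f i)) :
    ∫⁻ x, ∏ i, f i (x i) ∂Measure.pi μ = ∏ i, ∫⁻ y, f i y ∂μ i := by
  rw [lintegral_prod_eq_prod_lintegral_of_indepFun _ _
    (iIndepFun_pi fun i => (hf i).aemeasurable) fun i => (hf i).comp (measurable_pi_apply i)]
  exact prod_congr rfl fun i _ => (measurePreserving_eval μ i).lintegral_comp (hf i)

theorem lintegral_exp_sum_sq_pi_pi {ι κ : Type*} [Fintype ι] [Fintype κ] (ν : Measure ℝ)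
    [IsProbabilityMeasure ν] :
    ∫⁻ R, ENNReal.ofReal (exp (∑ p, ∑ j, R p j ^ 2))
        ∂(Measure.pi fun _ : ι => Measure.pi fun _ : κ => ν) =
      (∫⁻ x, ENNReal.ofReal (exp (x ^ 2)) ∂ν) ^ (Fintype.card ι * Fintype.card κ) := by
  have hf : Measurable fun x : ℝ => ENNReal.ofReal (exp (x ^ 2)) := by fun_prop
  have hexp (R : ι → κ → ℝ) : ENNReal.ofReal (exp (∑ p, ∑ j, R p j ^ 2)) =
      ∏ p, ∏ j, ENNReal.ofReal (exp (R p j ^ 2)) := by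
    simp only [exp_sum, ENNReal.ofReal_prod_of_nonneg fun _ _ => (exp_pos _).le,
      ENNReal.ofReal_prod_of_nonneg fun _ _ => prod_nonneg fun _ _ => (exp_pos _).le]
  simp_rw [hexp]
  rw [lintegral_pi_prod_eq_prod (fun _ : ι => Measure.pi fun _ : κ => ν)
    (f := fun _ r => ∏ j, ENNReal.ofReal (exp (r j ^ 2))) fun _ => by fun_prop]
  simp_rw [lintegral_pi_prod_eq_prod _ fun _ => hf, prod_const, card_univ, pow_mul']

def sparseSignMeasure (p : ℝ) : Measure ℝ :=
  ENNReal.ofReal p • Measure.dirac 0 + ENNReal.ofReal ((1 - p) / 2) • Measure.dirac (-1) +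
    ENNReal.ofReal ((1 - p) / 2) • Measure.dirac 1

theorem lintegral_exp_sq_sparseSignMeasure {p : ℝ} (hp₀ : 0 ≤ p) (hp₁ : p ≤ 1) :
    ∫⁻ x, ENNReal.ofReal (exp (x ^ 2)) ∂sparseSignMeasure p =
      ENNReal.ofReal ((1 - p) * (exp 1 - 1) + 1) := by
  have hf : Measurable fun x : ℝ => ENNReal.ofReal (exp (x ^ 2)) := by fun_prop
  have hq : 0 ≤ (1 - p) / 2 := by linarith
  simp only [sparseSignMeasure, lintegral_add_measure, lintegral_smul_measure,
    lintegral_dirac' _ hf, smul_eq_mul]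
  rw [← ENNReal.ofReal_mul hp₀, ← ENNReal.ofReal_mul hq, ← ENNReal.ofReal_mul hq,
    ← ENNReal.ofReal_add (by positivity) (by positivity),
    ← ENNReal.ofReal_add (by positivity) (by positivity)]
  congr 1
  norm_num
  ring

theorem measure_le_le_lintegral_exp_div {Ω : Type*} [MeasurableSpace Ω] (μ : Measure Ω)
    {Y : Ω → ℝ} (hY : AEMeasurable Y μ) (t : ℝ) :
    μ {ω | t ≤ Y ω} ≤ (∫⁻ ω, ENNReal.ofReal (exp (Y ω)) ∂μ) / ENNReal.ofReal (exp t) :=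
  (measure_mono fun _ hω => ENNReal.ofReal_le_ofReal (exp_le_exp.2 hω)).trans
    (meas_ge_le_lintegral_div (by fun_prop) (by positivity) ENNReal.ofReal_ne_top)

theorem sum_sq_sum_mul_le {ι κ : Type*} [Fintype ι] [Fintype κ] (u : ι → ℝ) (R : ι → κ → ℝ) :
    ∑ j, (∑ p, u p * R p j) ^ 2 ≤ (∑ p, u p ^ 2) * ∑ p, ∑ j, R p j ^ 2 :=
  calc ∑ j, (∑ p, u p * R p j) ^ 2 ≤ ∑ j, (∑ p, u p ^ 2) * ∑ p, R p j ^ 2 :=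
        sum_le_sum fun j _ => sum_mul_sq_le_sq_mul_sq _ _ _
    _ = (∑ p, u p ^ 2) * ∑ p, ∑ j, R p j ^ 2 := by rw [← mul_sum, sum_comm]

namespace BNeighbors

variable {n d : ℕ} {B : ℝ} {X X' : Mat n d}

theorem pos (h : BNeighbors B X X') : 0 < B := by
  obtain ⟨i, hne, -, hB⟩ := h
  obtain ⟨q, hq⟩ := Function.ne_iff.mp hne
  refine lt_of_lt_of_le (sqrt_pos.2 ?_) hB
  exact (pow_two_pos_of_ne_zero (sub_ne_zero.2 hq)).trans_le
    (single_le_sum (fun p _ => sq_nonneg (X i p - X' i p)) (mem_univ q))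

theorem frobSq_sub_le {k : ℕ} (h : BNeighbors B X X') (c : ℝ) (R : Fin d → Fin k → ℝ) :
    frobSq (fun i j => c * (∑ p, X i p * R p j) - c * (∑ p, X' i p * R p j)) ≤
      c ^ 2 * B ^ 2 * ∑ p, ∑ j, R p j ^ 2 := by
  obtain ⟨i, -, hrow, hB⟩ := h
  have hrowB : ∑ p, (X i p - X' i p) ^ 2 ≤ B ^ 2 :=
    (sqrt_le_left (sqrt_nonneg _ |>.trans hB)).1 hB
  have hdiff (j : Fin k) : c * (∑ p, X i p * R p j) - c * (∑ p, X' i p * R p j) =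
      c * ∑ p, (X i p - X' i p) * R p j := by
    simp only [sub_mul, sum_sub_distrib, mul_sub]
  calc frobSq (fun i j => c * (∑ p, X i p * R p j) - c * (∑ p, X' i p * R p j))
      = c ^ 2 * ∑ j, (∑ p, (X i p - X' i p) * R p j) ^ 2 := by
        simp only [frobSq]
        rw [sum_eq_single i (fun i' _ hi' => by simp [hrow i' hi']) (by simp)]
        simp only [hdiff, mul_pow, ← mul_sum]
    _ ≤ c ^ 2 * ((∑ p, (X i p - X' i p) ^ 2) * ∑ p, ∑ j, R p j ^ 2) := by
        gcongr; exact sum_sq_sum_mul_le _ R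
    _ ≤ c ^ 2 * B ^ 2 * ∑ p, ∑ j, R p j ^ 2 := by
        rw [mul_assoc]; gcongr

theorem le_sum_sq_of_le_sqrt_frobSq {k : ℕ} (h : BNeighbors B X X') (hk : 0 < k) {α : ℝ}
    (hα : 0 ≤ α) {R : Fin d → Fin k → ℝ}
    (hR : α ≤ sqrt (frobSq fun i j =>
      (k : ℝ)⁻¹ * (∑ p, X i p * R p j) - (k : ℝ)⁻¹ * (∑ p, X' i p * R p j))) :
    (k : ℝ) ^ 2 * α ^ 2 / B ^ 2 ≤ ∑ p, ∑ j, R p j ^ 2 := by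
  have hsq := ((le_sqrt hα (by unfold frobSq; positivity)).1 hR).trans (h.frobSq_sub_le _ R)
  have hkR : (0 : ℝ) < k := Nat.cast_pos.2 hk
  rw [div_le_iff₀ (pow_pos h.pos 2)]
  field_simp at hsq
  linarith

end BNeighbors

theorem pow_div_exp_le_of_mul_sqrt_le {d k : ℕ} {B α β c : ℝ} (hk : 0 < k) (hB : 0 < B) (hc : 1 ≤ c)
    (hβ : 0 < β) (hβ1 : β < 1)
    (hα : B / sqrt k * sqrt (d * log c - (k : ℝ)⁻¹ * log β) ≤ α) :
    c ^ (d * k) / exp ((k : ℝ) ^ 2 * α ^ 2 / B ^ 2) ≤ β := by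
  have hkR : (0 : ℝ) < k := Nat.cast_pos.2 hk
  have hs : 0 ≤ d * log c - (k : ℝ)⁻¹ * log β := by
    have := log_nonneg hc
    have := log_neg hβ hβ1
    nlinarith [inv_pos.2 hkR]
  have hsq := pow_le_pow_left₀ (by positivity) hα 2
  rw [mul_pow, div_pow, sq_sqrt hkR.le, sq_sqrt hs] at hsq
  have hexponent : d * k * log c - log β ≤ (k : ℝ) ^ 2 * α ^ 2 / B ^ 2 := by
    rw [le_div_iff₀ (by positivity)]
    field_simp at hsq
    nlinarith
  rw [div_le_iff₀ (exp_pos _), ← exp_log hβ, ← exp_add, ← exp_log (pow_pos (by linarith) _),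
    log_pow, exp_le_exp]
  push_cast
  linarith

theorem probabilistic_projection_sensitivity_general {n d k : ℕ} (hk : 0 < k)
    (p₀ B α β : ℝ) (hp₀ : p₀ ∈ Set.Ioo (0 : ℝ) 1) (hβ : 0 < β)
    (ν : Measure ℝ) [IsProbabilityMeasure ν]
    (hν : ν = ENNReal.ofReal p₀ • Measure.dirac 0 +
      ENNReal.ofReal ((1 - p₀) / 2) • Measure.dirac (-1) +
      ENNReal.ofReal ((1 - p₀) / 2) • Measure.dirac 1)
    (X X' : Mat n d)
    (hN : BNeighbors B X X')
    (hα : α ≥ B / Real.sqrt k *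
      Real.sqrt ((d : ℝ) * Real.log ((1 - p₀) * (Real.exp 1 - 1) + 1) -
        (k : ℝ)⁻¹ * Real.log β)) :
    (Measure.pi fun _ : Fin d => Measure.pi fun _ : Fin k => ν)
      {R : Fin d → Fin k → ℝ |
        α ≤ Real.sqrt (frobSq (fun i j => (k : ℝ)⁻¹ * (∑ p, X i p * R p j) -
          (k : ℝ)⁻¹ * (∑ p, X' i p * R p j)))} ≤ ENNReal.ofReal β := by
  rcases le_or_gt 1 β with hβ1 | hβ1
  · exact prob_le_one.trans (ENNReal.one_le_ofReal.2 hβ1)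
  set c := (1 - p₀) * (exp 1 - 1) + 1
  have hc : 1 ≤ c := by nlinarith [add_one_le_exp 1, hp₀.2]
  set t := (k : ℝ) ^ 2 * α ^ 2 / B ^ 2
  have hα0 : 0 ≤ α := le_trans (by have := hN.pos; positivity) hα
  have hmgf : ∫⁻ R, ENNReal.ofReal (exp (∑ p, ∑ j, R p j ^ 2))
      ∂(Measure.pi fun _ : Fin d => Measure.pi fun _ : Fin k => ν) =
        ENNReal.ofReal (c ^ (d * k)) := by
    rw [lintegral_exp_sum_sq_pi_pi, show ν = sparseSignMeasure p₀ from hν,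
      lintegral_exp_sq_sparseSignMeasure hp₀.1.le hp₀.2.le, ENNReal.ofReal_pow (by linarith),
      Fintype.card_fin, Fintype.card_fin]
  calc _ ≤ _ := measure_mono fun R hR => hN.le_sum_sq_of_le_sqrt_frobSq hk hα0 hR
    _ ≤ _ := measure_le_le_lintegral_exp_div _ (by fun_prop : Measurable _).aemeasurable t
    _ = ENNReal.ofReal (c ^ (d * k) / exp t) := by
      rw [hmgf, ENNReal.ofReal_div_of_pos (exp_pos t)]
    _ ≤ ENNReal.ofReal β :=
      ENNReal.ofReal_le_ofReal (pow_div_exp_le_of_mul_sqrt_le hk hN.pos hc hβ hβ1 hα)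

/-- probabilistic sensitivity bound for the random sign projection:
with R sampled entrywise i.i.d. from the categorical distribution on {−1,0,1}
(P(0)=p₀, P(±1)=(1−p₀)/2), the scaled projection of B-neighbors has Frobenius
distance at least α with probability at most β, whenever
α ≥ (B/√k)√(d ln((1−p₀)(e−1)+1) − k⁻¹ ln β). -/
theorem probabilistic_projection_sensitivity {n d k : ℕ} (hk : 0 < k)
    (p₀ B α β : ℝ) (hp₀ : p₀ ∈ Set.Ioo (0 : ℝ) 1) (hβ : 0 < β)
    (ν : Measure ℝ) [IsProbabilityMeasure ν]
    (hν : ν = ENNReal.ofReal p₀ • Measure.dirac 0 +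
      ENNReal.ofReal ((1 - p₀) / 2) • Measure.dirac (-1) +
      ENNReal.ofReal ((1 - p₀) / 2) • Measure.dirac 1)
    (X X' : Mat n d) (hX : X ∈ L2Ball n d) (hX' : X' ∈ L2Ball n d)
    (hN : BNeighbors B X X')
    (hα : α ≥ B / Real.sqrt k *
      Real.sqrt ((d : ℝ) * Real.log ((1 - p₀) * (Real.exp 1 - 1) + 1) -
        (k : ℝ)⁻¹ * Real.log β)) :
    (Measure.pi fun _ : Fin d => Measure.pi fun _ : Fin k => ν)
      {R : Fin d → Fin k → ℝ |
        α ≤ Real.sqrt (frobSq (fun i j => (k : ℝ)⁻¹ * (∑ p, X i p * R p j) -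
          (k : ℝ)⁻¹ * (∑ p, X' i p * R p j)))} ≤ ENNReal.ofReal β :=
  probabilistic_projection_sensitivity_general hk p₀ B α β hp₀ hβ ν hν X X' hN hα
end
end

section
/- Let ε > 0, δ ≥ 0, γ ∈ [1/2, 1), and suppose a nonnegative integer s satisfies γ ≤ e^{sε}(1 − γ) + ((e^{sε} − 1)/(e^ε − 1)) δ. Then s ≥ ε^{-1} ln Q, where Q = (δ + γ(e^ε − 1))/(δ + (1 − γ)(e^ε − 1)); moreover since s is an integer, s ≥ ⌈ε^{-1} ln Q⌉. -/
open MeasureTheory Real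

noncomputable section

/-- if a nonnegative integer s satisfies
γ ≤ e^{sε}(1−γ) + ((e^{sε}−1)/(e^ε−1))δ, then s ≥ ε⁻¹ ln Q and hence
s ≥ ⌈ε⁻¹ ln Q⌉, where Q = (δ + γ(e^ε−1))/(δ + (1−γ)(e^ε−1)). -/
theorem integer_step_lower_bound (ε δ γ : ℝ) (hε : 0 < ε) (hδ : 0 ≤ δ)
    (hγ : γ ∈ Set.Ico (1 / 2 : ℝ) 1) (s : ℕ)
    (h : γ ≤ Real.exp ((s : ℝ) * ε) * (1 - γ) +
      (Real.exp ((s : ℝ) * ε) - 1) / (Real.exp ε - 1) * δ) :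
    (s : ℝ) ≥ ε⁻¹ * Real.log ((δ + γ * (Real.exp ε - 1)) /
        (δ + (1 - γ) * (Real.exp ε - 1))) ∧
    (s : ℤ) ≥ ⌈ε⁻¹ * Real.log ((δ + γ * (Real.exp ε - 1)) /
        (δ + (1 - γ) * (Real.exp ε - 1)))⌉ := by
  obtain ⟨hγ1, hγ2⟩ := hγ
  have hc : 0 < Real.exp ε - 1 := by
    nlinarith [Real.add_one_le_exp ε]
  have hden : 0 < δ + (1 - γ) * (Real.exp ε - 1) := by nlinarith
  have hnum : 0 < δ + γ * (Real.exp ε - 1) := by nlinarith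
  have hE : (δ + γ * (Real.exp ε - 1)) / (δ + (1 - γ) * (Real.exp ε - 1)) ≤
      Real.exp ((s : ℝ) * ε) := by
    rw [div_le_iff₀ hden]
    have h2 : γ * (Real.exp ε - 1) ≤ Real.exp ((s : ℝ) * ε) * (1 - γ) * (Real.exp ε - 1)
        + (Real.exp ((s : ℝ) * ε) - 1) * δ := by
      have h3 := mul_le_mul_of_nonneg_right h hc.le
      have hdc : (Real.exp ((s : ℝ) * ε) - 1) / (Real.exp ε - 1) * δ * (Real.exp ε - 1)
          = (Real.exp ((s : ℝ) * ε) - 1) * δ := by field_simp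
      rw [add_mul, hdc] at h3
      linarith
    nlinarith
  have hlog : Real.log ((δ + γ * (Real.exp ε - 1)) / (δ + (1 - γ) * (Real.exp ε - 1)))
      ≤ (s : ℝ) * ε := by
    calc _ ≤ Real.log (Real.exp ((s : ℝ) * ε)) := Real.log_le_log (by positivity) hE
    _ = (s : ℝ) * ε := Real.log_exp _
  have h1 : ε⁻¹ * Real.log ((δ + γ * (Real.exp ε - 1)) /
      (δ + (1 - γ) * (Real.exp ε - 1))) ≤ (s : ℝ) := by
    rw [inv_mul_le_iff₀ hε]
    linarith [hlog]
  refine ⟨h1, ?_⟩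
  have := Int.ceil_le.mpr (by exact_mod_cast h1 : _ ≤ ((s:ℤ):ℝ))
  exact this
end
end
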